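/- arXiv:1208.0856 — 3 statements merged into one kernel-verified Lean document; each statement's English description precedes it below -/
import Mathlib

section
/- Let φ : G → C(X) be a finitely supported function, and let A = Σ_{g ∈ G} λ_μ(φ_g) ∘ U_g ∈ B(H_μ) (a finite sum). Then for every h ∈ G, ‖(1 − P)(A(δ_h ⊗ 1_X))‖² = Σ_{g ∈ G} σ_G(φ_g)(g h)², where δ_h ⊗ 1_X ∈ H_μ is the family whose coordinate at h is the constant function 1 on X and whose other coordinates are 0. In particular ‖(1 − P)(A(δ_h ⊗ 1_X))‖ ≥ σ_G(φ_e)(h), where e is the identity of G. -/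
open MeasureTheory Filter Topology

noncomputable section

/-- The Hilbert space `H_μ = ℓ²(G, L²(X,μ))`. -/
abbrev regularRepSpace (G : Type*) {X : Type*} [MeasurableSpace X] (μ : Measure X) :=
  lp (fun _ : G => Lp ℂ 2 μ) 2

/-- The `G`-deviation of a continuous function `φ` with respect to `μ`:
`σ_G(φ)(g) = ( ∫ |φ(g·x)|² dμ − |∫ φ(g·x) dμ|² )^(1/2)`. -/
def gDeviation {G X : Type*} [Group G] [TopologicalSpace X] [MulAction G X]
    [MeasurableSpace X] (μ : Measure X) (φ : C(X, ℂ)) (g : G) : ℝ :=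
  Real.sqrt ((∫ x, ‖φ (g • x)‖ ^ 2 ∂μ) - ‖∫ x, φ (g • x) ∂μ‖ ^ 2)

/-!
Only the translate `U_{k h⁻¹}(δ_h ⊗ 1_X)` contributes to the `k`-th coordinate of
`A(δ_h ⊗ 1_X)`, which is therefore the function `x ↦ φ_{k h⁻¹}(k • x)`. The projection `P`
subtracts its mean, and in `L²` of a probability measure the squared norm of a function minus
its mean is its variance, i.e. `σ_G(φ_{k h⁻¹})(k)²`. Summing over `k` (reindexed by `k = g h`)
gives the squared `ℓ²`-norm, and the coordinate `k = h` bounds it from below.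
-/

theorem lp.norm_sq_eq_tsum_norm_sq {ι : Type*} {E : ι → Type*} [∀ i, NormedAddCommGroup (E i)]
    (f : lp E 2) : ‖f‖ ^ 2 = ∑' i, ‖f i‖ ^ 2 := by
  simpa using lp.norm_rpow_eq_tsum (p := 2) (by norm_num) f

section L2

variable {α E : Type*} [MeasurableSpace α] {μ : Measure α}
  [NormedAddCommGroup E] [InnerProductSpace ℝ E]

theorem MeasureTheory.L2.norm_sq_eq_integral_norm_sq (f : Lp E 2 μ) :
    ‖f‖ ^ 2 = ∫ x, ‖f x‖ ^ 2 ∂μ := by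
  simp_rw [← real_inner_self_eq_norm_sq, L2.inner_def]

theorem MeasureTheory.L2.integrable_norm_sq (f : Lp E 2 μ) :
    Integrable (fun x => ‖f x‖ ^ 2) μ := by
  simpa only [real_inner_self_eq_norm_sq] using L2.integrable_inner (𝕜 := ℝ) f f

theorem integral_norm_sub_integral_sq [CompleteSpace E] [IsProbabilityMeasure μ] {f : α → E}
    (hf : Integrable f μ) (hf2 : Integrable (fun x => ‖f x‖ ^ 2) μ) :
    ∫ x, ‖f x - ∫ y, f y ∂μ‖ ^ 2 ∂μ = ∫ x, ‖f x‖ ^ 2 ∂μ - ‖∫ x, f x ∂μ‖ ^ 2 := by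
  set m := ∫ y, f y ∂μ
  have hinner : ∫ x, inner ℝ (f x) m ∂μ = ‖m‖ ^ 2 := by
    simp_rw [real_inner_comm m]
    rw [integral_inner hf, real_inner_self_eq_norm_sq]
  have hinner_int : Integrable (fun x => 2 * inner ℝ (f x) m) μ :=
    (hf.inner_const m).const_mul 2
  have hdiff_int : Integrable (fun x => ‖f x‖ ^ 2 - 2 * inner ℝ (f x) m) μ := hf2.sub hinner_int
  simp_rw [norm_sub_sq_real]
  rw [integral_add hdiff_int (integrable_const _), integral_sub hf2 hinner_int,
    integral_const_mul, hinner, integral_const, probReal_univ, one_smul]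
  ring

theorem MeasureTheory.L2.norm_sq_of_ae_eq_sub_integral [CompleteSpace E]
    [IsProbabilityMeasure μ] {f g : Lp E 2 μ} (hg : g =ᵐ[μ] fun x => f x - ∫ y, f y ∂μ) :
    ‖g‖ ^ 2 = ‖f‖ ^ 2 - ‖∫ x, f x ∂μ‖ ^ 2 := by
  rw [L2.norm_sq_eq_integral_norm_sq, L2.norm_sq_eq_integral_norm_sq,
    integral_congr_ae (hg.mono fun x hx => by rw [hx])]
  exact integral_norm_sub_integral_sq
    ((Lp.memLp f).integrable one_le_two) (L2.integrable_norm_sq f)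

end L2

section RegularRep

variable {G X : Type*} [MeasurableSpace X] {μ : Measure X}

theorem norm_sq_one_sub_P_apply [IsProbabilityMeasure μ]
    {P : regularRepSpace G μ →L[ℂ] regularRepSpace G μ}
    (hP : ∀ (ψ : regularRepSpace G μ) (g : G),
      (P ψ g : X → ℂ) =ᵐ[μ] fun _ => ∫ x, (ψ g : X → ℂ) x ∂μ)
    (ψ : regularRepSpace G μ) (g : G) :
    ‖((1 - P) ψ) g‖ ^ 2 = ‖ψ g‖ ^ 2 - ‖∫ x, (ψ g : X → ℂ) x ∂μ‖ ^ 2 := by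
  refine L2.norm_sq_of_ae_eq_sub_integral ?_
  filter_upwards [Lp.coeFn_sub (ψ g) (P ψ g), hP ψ g] with x hsub hPx
  rw [← hPx, ← Pi.sub_apply, ← hsub]
  rfl

variable [Group G] [TopologicalSpace X] [MulAction G X]

theorem multiplication_apply_eq_zero_of_ae_eq_zero
    {Λ : C(X, ℂ) → (regularRepSpace G μ →L[ℂ] regularRepSpace G μ)}
    (hΛ : ∀ (φ₀ : C(X, ℂ)) (ψ : regularRepSpace G μ) (g : G),
      (Λ φ₀ ψ g : X → ℂ) =ᵐ[μ] fun x => φ₀ (g • x) * (ψ g : X → ℂ) x)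
    {φ₀ : C(X, ℂ)} {ψ : regularRepSpace G μ} {g : G}
    (h0 : ∀ᵐ x ∂μ, φ₀ (g • x) * (ψ g : X → ℂ) x = 0) : Λ φ₀ ψ g = 0 :=
  Lp.eq_zero_iff_ae_eq_zero.2 ((hΛ φ₀ ψ g).trans h0)

theorem norm_one_sub_P_apply_eq_gDeviation [IsProbabilityMeasure μ]
    {P : regularRepSpace G μ →L[ℂ] regularRepSpace G μ}
    (hP : ∀ (ψ : regularRepSpace G μ) (g : G),
      (P ψ g : X → ℂ) =ᵐ[μ] fun _ => ∫ x, (ψ g : X → ℂ) x ∂μ)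
    {ψ : regularRepSpace G μ} {φ₀ : C(X, ℂ)} {g : G}
    (hψ : (ψ g : X → ℂ) =ᵐ[μ] fun x => φ₀ (g • x)) :
    ‖((1 - P) ψ) g‖ = gDeviation μ φ₀ g := by
  have hψ_sq : (fun x => ‖(ψ g : X → ℂ) x‖ ^ 2) =ᵐ[μ] fun x => ‖φ₀ (g • x)‖ ^ 2 :=
    hψ.fun_comp fun y => ‖y‖ ^ 2
  rw [gDeviation, ← integral_congr_ae hψ, ← integral_congr_ae hψ_sq,
    ← L2.norm_sq_eq_integral_norm_sq, ← norm_sq_one_sub_P_apply hP,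
    Real.sqrt_sq (norm_nonneg _)]

theorem sum_comp_translate_apply_delta_ae_eq
    {Λ : C(X, ℂ) → (regularRepSpace G μ →L[ℂ] regularRepSpace G μ)}
    {U : G → (regularRepSpace G μ →L[ℂ] regularRepSpace G μ)}
    (hΛ : ∀ (φ₀ : C(X, ℂ)) (ψ : regularRepSpace G μ) (g : G),
      (Λ φ₀ ψ g : X → ℂ) =ᵐ[μ] fun x => φ₀ (g • x) * (ψ g : X → ℂ) x)
    (hU : ∀ (h : G) (ψ : regularRepSpace G μ) (g : G), U h ψ g = ψ (h⁻¹ * g))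
    {φ : G → C(X, ℂ)} (hφ : (Function.support φ).Finite)
    {h : G} {e : regularRepSpace G μ}
    (he₁ : (e h : X → ℂ) =ᵐ[μ] fun _ => (1 : ℂ))
    (he₂ : ∀ g : G, g ≠ h → e g = 0) (k : G) :
    ((∑ g ∈ hφ.toFinset, Λ (φ g) ∘L U g) e k : X → ℂ) =ᵐ[μ] fun x => φ (k * h⁻¹) (k • x) := by
  have hother : ∀ g, g ≠ k * h⁻¹ → Λ (φ g) (U g e) k = 0 := by
    intro g hg
    have hgk : g⁻¹ * k ≠ h := fun hgk => hg (by rw [← hgk]; group)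
    refine multiplication_apply_eq_zero_of_ae_eq_zero hΛ ?_
    filter_upwards [Lp.coeFn_zero ℂ 2 μ] with x hx
    rw [hU, he₂ _ hgk, hx, Pi.zero_apply, mul_zero]
  have hout : k * h⁻¹ ∉ hφ.toFinset → Λ (φ (k * h⁻¹)) (U (k * h⁻¹) e) k = 0 := by
    intro hk
    rw [hφ.mem_toFinset, Function.notMem_support] at hk
    exact multiplication_apply_eq_zero_of_ae_eq_zero hΛ (by simp [hk])
  have hsingle :
      (∑ g ∈ hφ.toFinset, Λ (φ g) ∘L U g) e k = Λ (φ (k * h⁻¹)) (U (k * h⁻¹) e) k := by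
    rw [_root_.sum_apply, lp.coeFn_sum, Finset.sum_apply]
    exact Finset.sum_eq_single _ (fun g _ hg => hother g hg) hout
  rw [hsingle]
  refine (hΛ _ _ _).trans ?_
  rw [hU, show (k * h⁻¹)⁻¹ * k = h by group]
  filter_upwards [he₁] with x hx
  rw [hx, mul_one]

end RegularRep

theorem norm_sq_one_sub_P_on_delta_general
    {G X : Type*} [Group G] [TopologicalSpace X] [MeasurableSpace X] [MulAction G X]
    (μ : Measure X) [IsProbabilityMeasure μ]
    (Λ : C(X, ℂ) → (regularRepSpace G μ →L[ℂ] regularRepSpace G μ))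
    (U : G → (regularRepSpace G μ →L[ℂ] regularRepSpace G μ))
    (P : regularRepSpace G μ →L[ℂ] regularRepSpace G μ)
    (hΛ : ∀ (φ₀ : C(X, ℂ)) (ψ : regularRepSpace G μ) (g : G),
      (Λ φ₀ ψ g : X → ℂ) =ᵐ[μ] fun x => φ₀ (g • x) * (ψ g : X → ℂ) x)
    (hU : ∀ (h : G) (ψ : regularRepSpace G μ) (g : G), U h ψ g = ψ (h⁻¹ * g))
    (hP : ∀ (ψ : regularRepSpace G μ) (g : G),
      (P ψ g : X → ℂ) =ᵐ[μ] fun _ => ∫ x, (ψ g : X → ℂ) x ∂μ)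
    (φ : G → C(X, ℂ)) (hφ : (Function.support φ).Finite)
    (A : regularRepSpace G μ →L[ℂ] regularRepSpace G μ)
    (hA : A = ∑ g ∈ hφ.toFinset, Λ (φ g) ∘L U g)
    (h : G) (e : regularRepSpace G μ)
    (he₁ : (e h : X → ℂ) =ᵐ[μ] fun _ => (1 : ℂ))
    (he₂ : ∀ g : G, g ≠ h → e g = 0) :
    ‖((1 : regularRepSpace G μ →L[ℂ] regularRepSpace G μ) - P) (A e)‖ ^ 2
        = ∑' g : G, gDeviation μ (φ g) (g * h) ^ 2 ∧
      gDeviation μ (φ 1) h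
        ≤ ‖((1 : regularRepSpace G μ →L[ℂ] regularRepSpace G μ) - P) (A e)‖ := by
  subst hA
  set B := ((1 : regularRepSpace G μ →L[ℂ] regularRepSpace G μ) - P)
    ((∑ g ∈ hφ.toFinset, Λ (φ g) ∘L U g) e)
  have hcoord : ∀ k, ‖B k‖ = gDeviation μ (φ (k * h⁻¹)) k := fun k =>
    norm_one_sub_P_apply_eq_gDeviation hP
      (sum_comp_translate_apply_delta_ae_eq hΛ hU hφ he₁ he₂ k)
  refine ⟨?_, ?_⟩
  · rw [lp.norm_sq_eq_tsum_norm_sq, ← (Equiv.mulRight h).tsum_eq]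
    simp [hcoord]
  · simpa [hcoord] using lp.norm_apply_le_norm two_ne_zero B h

/-- For a finitely supported `φ : G → C(X)` and `A = Σ_g λ_μ(φ_g) U_g`, the square of
the norm of `(1 − P)(A(δ_h ⊗ 1_X))` equals `Σ_g σ_G(φ_g)(g h)²`; in particular it is
at least `σ_G(φ_e)(h)²` where `e` is the identity of `G`. -/
theorem norm_sq_one_sub_P_on_delta
    {G X : Type*} [Group G] [Countable G]
    [TopologicalSpace X] [CompactSpace X] [TopologicalSpace.MetrizableSpace X]
    [MeasurableSpace X] [BorelSpace X]
    [MulAction G X] [ContinuousConstSMul G X]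
    (μ : Measure X) [IsProbabilityMeasure μ]
    (Λ : C(X, ℂ) → (regularRepSpace G μ →L[ℂ] regularRepSpace G μ))
    (U : G → (regularRepSpace G μ →L[ℂ] regularRepSpace G μ))
    (P : regularRepSpace G μ →L[ℂ] regularRepSpace G μ)
    (hΛ : ∀ (φ₀ : C(X, ℂ)) (ψ : regularRepSpace G μ) (g : G),
      (Λ φ₀ ψ g : X → ℂ) =ᵐ[μ] fun x => φ₀ (g • x) * (ψ g : X → ℂ) x)
    (hU : ∀ (h : G) (ψ : regularRepSpace G μ) (g : G), U h ψ g = ψ (h⁻¹ * g))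
    (hP : ∀ (ψ : regularRepSpace G μ) (g : G),
      (P ψ g : X → ℂ) =ᵐ[μ] fun _ => ∫ x, (ψ g : X → ℂ) x ∂μ)
    (φ : G → C(X, ℂ)) (hφ : (Function.support φ).Finite)
    (A : regularRepSpace G μ →L[ℂ] regularRepSpace G μ)
    (hA : A = ∑ g ∈ hφ.toFinset, Λ (φ g) ∘L U g)
    (h : G) (e : regularRepSpace G μ)
    (he₁ : (e h : X → ℂ) =ᵐ[μ] fun _ => (1 : ℂ))
    (he₂ : ∀ g : G, g ≠ h → e g = 0) :
    ‖((1 : regularRepSpace G μ →L[ℂ] regularRepSpace G μ) - P) (A e)‖ ^ 2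
        = ∑' g : G, gDeviation μ (φ g) (g * h) ^ 2 ∧
      gDeviation μ (φ 1) h
        ≤ ‖((1 : regularRepSpace G μ →L[ℂ] regularRepSpace G μ) - P) (A e)‖ :=
  norm_sq_one_sub_P_on_delta_general μ Λ U P hΛ hU hP φ hφ A hA h e he₁ he₂
end
end

section
/- Let (Y,d) be a metric space equipped with a Borel probability measure μ, and let C, Q > 0 be constants such that μ(closedBall(x,r)) ≤ C·r^Q for every x ∈ Y and every r > 0. Let α > 0 satisfy 2α < Q. Then there exists a constant C' > 0, depending only on C, Q and α, with the following property: for every z ∈ Y, every M ≥ 0, and every Borel measurable h: Y × Y → [0,∞) satisfying h(ξ,ξ')·d(z,ξ)·d(z,ξ') ≤ M for all ξ, ξ' ∈ Y, one has ∬_{Y×Y} h(ξ,ξ')^{2α} d(μ×μ)(ξ,ξ') ≤ C'·M^{2α}. -/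
/-!
Off the null set `{ξ = z} ∪ {ξ' = z}` the constraint gives
`h(ξ,ξ')^{2α} ≤ M^{2α} d(z,ξ)^{-2α} d(z,ξ')^{-2α}`, so by Tonelli the double integral is at
most `M^{2α} (∫ d(z,ξ)^{-2α} dμ)^2`. The single integral is finite by the layer-cake formula:
the superlevel set `{d(z,·)^{-s} > t}` lies in the ball of radius `t^{-1/s}`, of measure at most
`C t^{-Q/s}`, which is integrable on `(1,∞)` exactly because `s = 2α < Q`.
-/

open MeasureTheory Set Filter Topology Metric
open scoped ENNReal

theorem lintegral_Ioi_rpow_of_lt {a c : ℝ} (ha : a < -1) (hc : 0 < c) :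
    ∫⁻ t in Ioi c, ENNReal.ofReal (t ^ a) = ENNReal.ofReal (-c ^ (a + 1) / (a + 1)) := by
  rw [← integral_Ioi_rpow_of_lt ha hc]
  refine (ofReal_integral_eq_lintegral_ofReal (integrableOn_Ioi_rpow_of_lt ha hc) ?_).symm
  exact (ae_restrict_iff' measurableSet_Ioi).2
    (.of_forall fun t ht => Real.rpow_nonneg (hc.trans ht).le a)

theorem Real.rpow_le_mul_rpow_neg_mul_rpow_neg {x a b M s : ℝ} (hx : 0 ≤ x) (ha : 0 < a)
    (hb : 0 < b) (hs : 0 ≤ s) (h : x * a * b ≤ M) :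
    x ^ s ≤ M ^ s * (a ^ (-s) * b ^ (-s)) := by
  have hM : 0 ≤ M := le_trans (by positivity) h
  have hx_le : x ≤ M / (a * b) := by
    rw [le_div_iff₀ (by positivity), ← mul_assoc]
    exact h
  calc x ^ s ≤ (M / (a * b)) ^ s := Real.rpow_le_rpow hx hx_le hs
    _ = M ^ s * (a ^ (-s) * b ^ (-s)) := by
      rw [Real.div_rpow hM (by positivity), Real.mul_rpow ha.le hb.le, Real.rpow_neg ha.le,
        Real.rpow_neg hb.le, div_eq_mul_inv, mul_inv]

section BallGrowth

variable {Y : Type*} [PseudoMetricSpace Y] [MeasurableSpace Y] (μ : Measure Y)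
  {C Q s : ℝ} {z : Y}

theorem measure_singleton_eq_zero_of_closedBall_le_rpow (hQ : 0 < Q)
    (hball : ∀ r, 0 < r → μ (closedBall z r) ≤ ENNReal.ofReal (C * r ^ Q)) : μ {z} = 0 := by
  have hlim : Tendsto (fun r : ℝ => ENNReal.ofReal (C * r ^ Q)) (𝓝[>] 0) (𝓝 0) := by
    have hcont : Continuous fun r : ℝ => ENNReal.ofReal (C * r ^ Q) :=
      ENNReal.continuous_ofReal.comp (continuous_const.mul (Real.continuous_rpow_const hQ.le))
    simpa [Real.zero_rpow hQ.ne'] using (hcont.tendsto 0).mono_left nhdsWithin_le_nhds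
  refine le_zero_iff.mp (ge_of_tendsto hlim (eventually_nhdsWithin_of_forall fun r hr => ?_))
  exact (measure_mono (singleton_subset_iff.2 (mem_closedBall_self (le_of_lt hr)))).trans
    (hball r hr)

theorem measure_lt_dist_rpow_neg_le (hs : 0 < s)
    (hball : ∀ r, 0 < r → μ (closedBall z r) ≤ ENNReal.ofReal (C * r ^ Q))
    {t : ℝ} (ht : 0 < t) :
    μ {ξ | t < dist z ξ ^ (-s)} ≤ ENNReal.ofReal (C * t ^ (-(Q / s))) := by
  have hsub : {ξ | t < dist z ξ ^ (-s)} ⊆ closedBall z (t ^ (-s)⁻¹) := by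
    intro ξ hξ
    rcases (dist_nonneg : 0 ≤ dist z ξ).eq_or_lt with hd | hd
    · rw [mem_ofPred_eq, ← hd, Real.zero_rpow (neg_ne_zero.2 hs.ne')] at hξ
      exact absurd ht hξ.not_gt
    · rw [mem_closedBall, dist_comm]
      exact ((Real.lt_rpow_inv_iff_of_neg hd ht (neg_neg_of_pos hs)).2 hξ).le
  calc μ {ξ | t < dist z ξ ^ (-s)} ≤ μ (closedBall z (t ^ (-s)⁻¹)) := measure_mono hsub
    _ ≤ ENNReal.ofReal (C * (t ^ (-s)⁻¹) ^ Q) := hball _ (by positivity)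
    _ = ENNReal.ofReal (C * t ^ (-(Q / s))) := by
      rw [← Real.rpow_mul ht.le, inv_neg, neg_mul, inv_mul_eq_div]

theorem lintegral_dist_rpow_neg_le [OpensMeasurableSpace Y] [IsFiniteMeasure μ]
    (hs : 0 < s) (hsQ : s < Q)
    (hball : ∀ r, 0 < r → μ (closedBall z r) ≤ ENNReal.ofReal (C * r ^ Q)) :
    ∫⁻ ξ, ENNReal.ofReal (dist z ξ ^ (-s)) ∂μ
      ≤ μ univ + ENNReal.ofReal (C / (Q / s - 1)) := by
  have hp : -(Q / s) < -1 := neg_lt_neg ((one_lt_div hs).2 hsQ)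
  have hmeas : Measurable fun ξ => dist z ξ ^ (-s) :=
    (continuous_const.dist continuous_id).measurable.pow_const _
  rw [lintegral_eq_lintegral_meas_lt μ (.of_forall fun ξ => Real.rpow_nonneg dist_nonneg _)
      hmeas.aemeasurable, ← Ioc_union_Ioi_eq_Ioi zero_le_one,
    lintegral_union measurableSet_Ioi (Ioc_disjoint_Ioi le_rfl)]
  gcongr
  · calc ∫⁻ t in Ioc 0 1, μ {ξ | t < dist z ξ ^ (-s)}
          ≤ ∫⁻ t in Ioc (0 : ℝ) 1, μ univ :=
          lintegral_mono fun t => measure_mono (subset_univ _)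
      _ = μ univ := by simp [Real.volume_Ioc]
  · calc ∫⁻ t in Ioi 1, μ {ξ | t < dist z ξ ^ (-s)}
          ≤ ∫⁻ t in Ioi (1 : ℝ), ENNReal.ofReal C * ENNReal.ofReal (t ^ (-(Q / s))) :=
          setLIntegral_mono' measurableSet_Ioi fun t ht =>
            (measure_lt_dist_rpow_neg_le μ hs hball (zero_lt_one.trans ht)).trans_eq
              (ENNReal.ofReal_mul' (Real.rpow_nonneg (zero_lt_one.trans ht).le _))
      _ = ENNReal.ofReal C * ENNReal.ofReal (1 / (Q / s - 1)) := by
          rw [lintegral_const_mul' _ _ ENNReal.ofReal_ne_top,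
            lintegral_Ioi_rpow_of_lt hp one_pos, Real.one_rpow,
            ← neg_div_neg_eq, neg_neg, neg_add, neg_neg, sub_eq_add_neg]
      _ = ENNReal.ofReal (C / (Q / s - 1)) := by
          rw [← ENNReal.ofReal_mul' (one_div_nonneg.2 (by linarith)), mul_one_div]

end BallGrowth

/-- On a metric measure space satisfying the upper Ahlfors-regularity bound
`μ(B̄(x,r)) ≤ C·r^Q`, and for `0 < α` with `2α < Q`, there is a constant `C' > 0`
(depending only on `C`, `Q`, `α`) such that for every `z`, `M ≥ 0` and nonnegative
Borel `h : Y × Y → [0,∞)` with `h(ξ,ξ')·d(z,ξ)·d(z,ξ') ≤ M` for all `ξ, ξ'`, one has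
`∬ h(ξ,ξ')^(2α) d(μ×μ) ≤ C'·M^(2α)`. -/
theorem double_integral_bound_of_ahlfors_upper
    {Y : Type*} [MetricSpace Y] [MeasurableSpace Y] [BorelSpace Y]
    (μ : Measure Y) [IsProbabilityMeasure μ]
    (C Q : ℝ) (hC : 0 < C) (hQ : 0 < Q)
    (hreg : ∀ (x : Y) (r : ℝ), 0 < r →
      μ (Metric.closedBall x r) ≤ ENNReal.ofReal (C * r ^ Q))
    (α : ℝ) (hα : 0 < α) (hαQ : 2 * α < Q) :
    ∃ C' : ℝ, 0 < C' ∧ ∀ (z : Y) (M : ℝ), 0 ≤ M →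
      ∀ h : Y × Y → ℝ, Measurable h → (∀ p : Y × Y, 0 ≤ h p) →
      (∀ ξ ξ' : Y, h (ξ, ξ') * dist z ξ * dist z ξ' ≤ M) →
      ∫⁻ p : Y × Y, ENNReal.ofReal (h p ^ (2 * α)) ∂(μ.prod μ)
        ≤ ENNReal.ofReal (C' * M ^ (2 * α)) := by
  set s := 2 * α
  have hs : 0 < s := by positivity
  have hp : 0 < Q / s - 1 := sub_pos.2 ((one_lt_div hs).2 hαQ)
  set K : ℝ := 1 + C / (Q / s - 1)
  have hK : 0 < K := by positivity
  refine ⟨K * K, mul_pos hK hK, fun z M hM h _ hnn hbound => ?_⟩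
  set g : Y → ℝ≥0∞ := fun ξ => ENNReal.ofReal (dist z ξ ^ (-s))
  have hg : Measurable g := by fun_prop
  have hg_int : ∫⁻ ξ, g ξ ∂μ ≤ ENNReal.ofReal K := by
    refine (lintegral_dist_rpow_neg_le μ hs hαQ (hreg z)).trans_eq ?_
    rw [measure_univ, ENNReal.ofReal_add zero_le_one (by positivity), ENNReal.ofReal_one]
  -- `0 ^ (-s) = 0` in Lean, so the pointwise bound below only holds away from `z`.
  have hz : ∀ᵐ q ∂μ.prod μ, q.1 ≠ z ∧ q.2 ≠ z := by
    have hz : ∀ᵐ ξ ∂μ, ξ ≠ z := measure_eq_zero_iff_ae_notMem.1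
      (measure_singleton_eq_zero_of_closedBall_le_rpow μ hQ (hreg z))
    exact (Measure.quasiMeasurePreserving_fst.ae hz).and
      (Measure.quasiMeasurePreserving_snd.ae hz)
  have hae : ∀ᵐ q ∂μ.prod μ,
      ENNReal.ofReal (h q ^ s) ≤ ENNReal.ofReal (M ^ s) * (g q.1 * g q.2) := by
    filter_upwards [hz] with q ⟨h1, h2⟩
    rw [← ENNReal.ofReal_mul' (Real.rpow_nonneg dist_nonneg _),
      ← ENNReal.ofReal_mul (Real.rpow_nonneg hM _)]
    exact ENNReal.ofReal_le_ofReal (Real.rpow_le_mul_rpow_neg_mul_rpow_neg (hnn q)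
      (dist_pos.2 h1.symm) (dist_pos.2 h2.symm) hs.le (hbound q.1 q.2))
  calc ∫⁻ q, ENNReal.ofReal (h q ^ s) ∂μ.prod μ
      ≤ ∫⁻ q, ENNReal.ofReal (M ^ s) * (g q.1 * g q.2) ∂μ.prod μ := lintegral_mono_ae hae
    _ = ENNReal.ofReal (M ^ s) * ((∫⁻ ξ, g ξ ∂μ) * ∫⁻ ξ, g ξ ∂μ) := by
      rw [lintegral_const_mul' _ _ ENNReal.ofReal_ne_top,
        lintegral_prod_mul hg.aemeasurable hg.aemeasurable]
    _ ≤ ENNReal.ofReal (M ^ s) * (ENNReal.ofReal K * ENNReal.ofReal K) := by gcongr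
    _ = ENNReal.ofReal (K * K * M ^ s) := by
      rw [← ENNReal.ofReal_mul hK.le, ← ENNReal.ofReal_mul (Real.rpow_nonneg hM _), mul_comm]
end

section
/- Let (Y,d) be a compact metric space with a Borel probability measure μ, and let C, Q > 0 be constants with μ(closedBall(x,r)) ≤ C·r^Q for every x ∈ Y and r > 0. Let ω ∈ Y, let (f_n) be a sequence of Borel measurable maps Y → Y, let (z_n) be a sequence in Y, and let (a_n) be a sequence of nonnegative reals converging to 0 such that d(f_n ξ, ω)·d(z_n, ξ) ≤ a_n for all ξ ∈ Y and all n. Then for every continuous φ: Y → ℝ, ∫_Y φ(f_n ξ) dμ(ξ) → φ(ω) as n → ∞; that is, the pushforward measures (f_n)_*μ converge weakly to the Dirac measure δ_ω. -/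
/-! The bound `d(f_n ξ, ω)·d(z_n, ξ) ≤ a_n` forces `d(f_n ξ, ω) < δ` outside the ball
`B̄(z_n, a_n/δ)`, whose measure tends to `0` by the regularity bound. Hence `f_n → ω` in
measure, and convergence in measure implies convergence in distribution. -/

open MeasureTheory Filter Topology Metric BoundedContinuousFunction

theorem tendsto_measure_closedBall_of_le_rpow {α ι : Type*} [PseudoMetricSpace α]
    [MeasurableSpace α] {μ : Measure α} {C Q : ℝ} (hQ : 0 < Q)
    (hreg : ∀ (x : α) (r : ℝ), 0 < r → μ (closedBall x r) ≤ ENNReal.ofReal (C * r ^ Q))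
    {l : Filter ι} (x : ι → α) {r : ι → ℝ} (hr : Tendsto r l (𝓝 0)) :
    Tendsto (fun i => μ (closedBall (x i) (r i))) l (𝓝 0) := by
  have hpow : Tendsto (fun s : ℝ => ENNReal.ofReal (C * s ^ Q)) (𝓝[>] 0) (𝓝 0) := by
    have := ENNReal.tendsto_ofReal
      ((Real.continuousAt_rpow_const 0 Q (Or.inr hQ.le)).tendsto.const_mul C)
    rw [Real.zero_rpow hQ.ne', mul_zero, ENNReal.ofReal_zero] at this
    exact this.mono_left nhdsWithin_le_nhds
  refine ENNReal.tendsto_nhds_zero.2 fun ε hε => ?_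
  obtain ⟨s, hsε, hs⟩ :=
    ((hpow.eventually (eventually_le_nhds hε)).and self_mem_nhdsWithin).exists
  filter_upwards [hr.eventually (eventually_lt_nhds hs)] with i hi
  exact (measure_mono (closedBall_subset_closedBall hi.le)).trans ((hreg _ _ hs).trans hsε)

theorem setOf_le_dist_subset_closedBall {α β : Type*} [PseudoMetricSpace α]
    [PseudoMetricSpace β] {g : α → β} {z : α} {ω : β} {a δ : ℝ} (hδ : 0 < δ)
    (h : ∀ ξ, dist (g ξ) ω * dist z ξ ≤ a) :
    {ξ | δ ≤ dist (g ξ) ω} ⊆ closedBall z (a / δ) := fun ξ hξ => by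
  rw [mem_closedBall, dist_comm, le_div_iff₀' hδ]
  exact (mul_le_mul_of_nonneg_right hξ dist_nonneg).trans (h ξ)

theorem MeasureTheory.TendstoInMeasure.tendsto_integral_comp_of_const {Ω E ι : Type*}
    [MeasurableSpace Ω] {μ : Measure Ω} [IsProbabilityMeasure μ] [PseudoEMetricSpace E]
    [MeasurableSpace E] [BorelSpace E] {l : Filter ι} [l.IsCountablyGenerated] [l.NeBot]
    {f : ι → Ω → E} {c : E} (h : TendstoInMeasure μ f l (fun _ => c))
    (hf : ∀ i, AEMeasurable (f i) μ) (φ : E →ᵇ ℝ) :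
    Tendsto (fun i => ∫ x, φ (f i x) ∂μ) l (𝓝 (φ c)) := by
  have := ProbabilityMeasure.tendsto_iff_forall_integral_tendsto.1
    (h.tendstoInDistribution hf).tendsto φ
  simpa [integral_map (hf _) φ.continuous.aestronglyMeasurable,
    integral_dirac' _ _ φ.continuous.stronglyMeasurable] using this

theorem pushforward_tendsto_dirac_general
    {Y : Type*} [MetricSpace Y] [CompactSpace Y] [MeasurableSpace Y] [BorelSpace Y]
    (μ : Measure Y) [IsProbabilityMeasure μ]
    (C Q : ℝ) (hQ : 0 < Q)
    (hreg : ∀ (x : Y) (r : ℝ), 0 < r →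
      μ (Metric.closedBall x r) ≤ ENNReal.ofReal (C * r ^ Q))
    (ω : Y) (f : ℕ → Y → Y) (hf : ∀ n, Measurable (f n)) (z : ℕ → Y)
    (a : ℕ → ℝ) (ha : Tendsto a atTop (𝓝 0))
    (hbound : ∀ (n : ℕ) (ξ : Y), dist (f n ξ) ω * dist (z n) ξ ≤ a n) :
    ∀ φ : C(Y, ℝ), Tendsto (fun n => ∫ ξ, φ (f n ξ) ∂μ) atTop (𝓝 (φ ω)) := by
  have hmeas : TendstoInMeasure μ f atTop (fun _ => ω) := by
    refine tendstoInMeasure_iff_dist.2 fun δ hδ => ?_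
    have hball := tendsto_measure_closedBall_of_le_rpow hQ hreg z (by simpa using ha.div_const δ)
    exact tendsto_of_tendsto_of_tendsto_of_le_of_le tendsto_const_nhds hball (fun _ => bot_le)
      fun n => measure_mono (setOf_le_dist_subset_closedBall hδ (hbound n))
  exact fun φ => hmeas.tendsto_integral_comp_of_const (fun n => (hf n).aemeasurable)
    (mkOfCompact φ)

/-- Weak convergence of pushforwards to a Dirac measure.
On a compact metric space with the upper Ahlfors-regularity bound `μ(B̄(x,r)) ≤ C·r^Q`,
if Borel maps `f_n : Y → Y`, points `z_n ∈ Y` and nonnegative reals `a_n → 0` satisfy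
`d(f_n ξ, ω)·d(z_n, ξ) ≤ a_n` for all `ξ` and `n`, then for every continuous
`φ : Y → ℝ` one has `∫ φ(f_n ξ) dμ(ξ) → φ(ω)`, i.e. `(f_n)_*μ → δ_ω` weakly. -/
theorem pushforward_tendsto_dirac
    {Y : Type*} [MetricSpace Y] [CompactSpace Y] [MeasurableSpace Y] [BorelSpace Y]
    (μ : Measure Y) [IsProbabilityMeasure μ]
    (C Q : ℝ) (hC : 0 < C) (hQ : 0 < Q)
    (hreg : ∀ (x : Y) (r : ℝ), 0 < r →
      μ (Metric.closedBall x r) ≤ ENNReal.ofReal (C * r ^ Q))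
    (ω : Y) (f : ℕ → Y → Y) (hf : ∀ n, Measurable (f n)) (z : ℕ → Y)
    (a : ℕ → ℝ) (ha0 : ∀ n, 0 ≤ a n) (ha : Tendsto a atTop (𝓝 0))
    (hbound : ∀ (n : ℕ) (ξ : Y), dist (f n ξ) ω * dist (z n) ξ ≤ a n) :
    ∀ φ : C(Y, ℝ), Tendsto (fun n => ∫ ξ, φ (f n ξ) ∂μ) atTop (𝓝 (φ ω)) :=
  pushforward_tendsto_dirac_general μ C Q hQ hreg ω f hf z a ha hbound
end
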